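/- arXiv:1907.00560 — 2 statements merged into one kernel-verified Lean document; each statement's English description precedes it below -/
import Mathlib

section
/- For every n ∈ ℕ and every symmetric function f ∈ 𝕊_n, there exist a weight matrix W ∈ ℝ^{(2n+2)×n}, a bias vector B ∈ ℝ^{2n+2}, an output weight vector M ∈ ℝ^{2n+2}, and an output bias b ∈ ℝ such that for all x ∈ {0,1}^n, f(x)·(M·σ(Wx + B) + b) > 0, where σ(ξ) = 1/(1+exp(−ξ)) is applied coordinatewise. That is, every symmetric function on {0,1}^n is represented (in sign) by a fully connected network with one hidden layer of 2n+2 sigmoid neurons. -/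
/-- The sigmoid function σ(ξ) = 1/(1+exp(−ξ)). -/
noncomputable def sigmoid (ξ : ℝ) : ℝ := 1 / (1 + Real.exp (-ξ))

/-- The Hamming weight |x| of x ∈ {0,1}^n. -/
def hw {n : ℕ} (x : Fin n → Bool) : ℕ := (Finset.univ.filter (fun i => x i)).card

/-- The symmetric function f_A : f_A(x) = 1 if |x| ∈ A, and −1 otherwise. -/
def fA {n : ℕ} (A : Finset ℕ) (x : Fin n → Bool) : ℝ := if hw x ∈ A then 1 else -1

/-- x ∈ {0,1}^n viewed as a real vector. -/
def toR {n : ℕ} (x : Fin n → Bool) : Fin n → ℝ := fun i => if x i then 1 else 0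

/-! ### Auxiliary lemmas -/

noncomputable def Fv (A : Finset ℕ) (k : ℕ) : ℝ := if k ∈ A then 1 else -1

noncomputable def dv (A : Finset ℕ) : ℕ → ℝ
  | 0 => Fv A 0
  | (k+1) => Fv A (k+1) - Fv A k

lemma sum_dv (A : Finset ℕ) (m : ℕ) :
    ∑ k ∈ Finset.range (m+1), dv A k = Fv A m := by
  induction m with
  | zero => simp [dv]
  | succ m ih => rw [Finset.sum_range_succ, ih]; simp [dv]

lemma abs_dv_le (A : Finset ℕ) (k : ℕ) : |dv A k| ≤ 2 := by
  cases k with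
  | zero => simp only [dv, Fv]; split_ifs <;> norm_num
  | succ k => simp only [dv, Fv]; split_ifs <;> norm_num

lemma sigmoid_pos (ξ : ℝ) : 0 < sigmoid ξ := by
  unfold sigmoid; positivity

lemma sigmoid_le_one (ξ : ℝ) : sigmoid ξ ≤ 1 := by
  unfold sigmoid
  rw [div_le_one (by positivity)]
  nlinarith [Real.exp_pos (-ξ)]

lemma sigmoid_le_exp {ξ : ℝ} : sigmoid ξ ≤ Real.exp ξ := by
  unfold sigmoid
  rw [div_le_iff₀ (by positivity)]
  have h : Real.exp ξ * Real.exp (-ξ) = 1 := by rw [← Real.exp_add]; simp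
  nlinarith [Real.exp_pos ξ, Real.exp_pos (-ξ)]

lemma one_sub_sigmoid_le {ξ : ℝ} : 1 - sigmoid ξ ≤ Real.exp (-ξ) := by
  unfold sigmoid
  have h : 0 < 1 + Real.exp (-ξ) := by positivity
  rw [sub_le_iff_le_add, ← sub_le_iff_le_add', le_div_iff₀ h]
  nlinarith [Real.exp_pos (-ξ), sq_nonneg (Real.exp (-ξ))]

lemma sum_toR {n : ℕ} (x : Fin n → Bool) : ∑ j, toR x j = (hw x : ℝ) := by
  simp [toR, hw, Finset.sum_boole]

/-- Every symmetric function f ∈ 𝕊_n is represented (in sign) by a fully connected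
network with one hidden layer of 2n+2 sigmoid neurons. -/
theorem stmt3 (n : ℕ) (f : (Fin n → Bool) → ℝ)
    (hf : ∃ A : Finset ℕ, A ⊆ Finset.range (n + 1) ∧ f = fA A) :
    ∃ (W : Matrix (Fin (2 * n + 2)) (Fin n) ℝ) (B M : Fin (2 * n + 2) → ℝ) (b : ℝ),
      ∀ x : Fin n → Bool,
        0 < f x * ((∑ i, M i * sigmoid (W.mulVec (toR x) i + B i)) + b) := by
  obtain ⟨A, -, rfl⟩ := hf
  set C : ℝ := 4 * n + 8 with hC
  have hCpos : (0:ℝ) < C := by positivity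
  set W0 : Matrix (Fin (2*n+2)) (Fin n) ℝ := fun i _ => if (i:ℕ) ≤ n then C else 0 with hW0
  set B0 : Fin (2*n+2) → ℝ := fun i => if (i:ℕ) ≤ n then C * (1/2 - (i:ℕ)) else 0 with hB0
  set M0 : Fin (2*n+2) → ℝ := fun i => if (i:ℕ) ≤ n then dv A (i:ℕ) else 0 with hM0
  refine ⟨W0, B0, M0, 0, ?_⟩
  intro x
  set m : ℕ := hw x with hm
  have hmn : m ≤ n := by
    have := Finset.card_filter_le (Finset.univ : Finset (Fin n)) (fun i => x i = true)
    simpa [hm, hw] using this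
  have hmul : ∀ i : Fin (2*n+2),
      W0.mulVec (toR x) i = if (i:ℕ) ≤ n then C * (m:ℝ) else 0 := by
    intro i
    simp only [hW0, Matrix.mulVec, dotProduct]
    split_ifs with h
    · rw [← Finset.mul_sum, sum_toR]
    · simp
  have hsum : (∑ i : Fin (2*n+2), M0 i * sigmoid (W0.mulVec (toR x) i + B0 i))
      = ∑ k ∈ Finset.range (n+1), dv A k * sigmoid (C * ((m:ℝ) - k) + C/2) := by
    calc (∑ i : Fin (2*n+2), M0 i * sigmoid (W0.mulVec (toR x) i + B0 i))
        = ∑ i : Fin (2*n+2), (if (i:ℕ) ≤ n then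
            dv A (i:ℕ) * sigmoid (C * ((m:ℝ) - (i:ℕ)) + C/2) else 0) := by
          refine Finset.sum_congr rfl fun i _ => ?_
          rw [hmul i]
          simp only [hM0, hB0]
          split_ifs with h
          · ring_nf
          · simp
      _ = ∑ k ∈ Finset.range (2*n+2), (if k ≤ n then
            dv A k * sigmoid (C * ((m:ℝ) - k) + C/2) else 0) := by
          exact Fin.sum_univ_eq_sum_range
            (fun k => if k ≤ n then dv A k * sigmoid (C * ((m:ℝ) - k) + C/2) else 0) (2*n+2)
      _ = ∑ k ∈ Finset.range (n+1), (if k ≤ n then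
            dv A k * sigmoid (C * ((m:ℝ) - k) + C/2) else 0) := by
          refine (Finset.sum_subset (Finset.range_subset_range.mpr (by omega)) ?_).symm
          intro k _ hk
          rw [Finset.mem_range, not_lt] at hk
          rw [if_neg (by omega)]
      _ = ∑ k ∈ Finset.range (n+1), dv A k * sigmoid (C * ((m:ℝ) - k) + C/2) := by
          refine Finset.sum_congr rfl fun k hk => ?_
          rw [Finset.mem_range] at hk
          rw [if_pos (by omega)]
  rw [hsum]
  set S : ℝ := ∑ k ∈ Finset.range (n+1), dv A k * sigmoid (C * ((m:ℝ) - k) + C/2) with hS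
  -- step value
  have hstep : ∑ k ∈ Finset.range (n+1), dv A k * (if k ≤ m then (1:ℝ) else 0) = Fv A m := by
    have h1 : ∑ k ∈ Finset.range (n+1), dv A k * (if k ≤ m then (1:ℝ) else 0)
        = ∑ k ∈ Finset.range (m+1), dv A k * (if k ≤ m then (1:ℝ) else 0) := by
      refine (Finset.sum_subset (Finset.range_subset_range.mpr (by omega)) ?_).symm
      intro k _ hk
      rw [Finset.mem_range, not_lt] at hk
      rw [if_neg (by omega), mul_zero]
    rw [h1, ← sum_dv A m]
    refine Finset.sum_congr rfl fun k hk => ?_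
    rw [Finset.mem_range] at hk
    rw [if_pos (by omega), mul_one]
  -- error bound
  have hterm : ∀ k ∈ Finset.range (n+1),
      |dv A k * sigmoid (C * ((m:ℝ) - k) + C/2) - dv A k * (if k ≤ m then (1:ℝ) else 0)|
        ≤ 2 * Real.exp (-(C/2)) := by
    intro k _
    rw [← mul_sub, abs_mul]
    have hd := abs_dv_le A k
    have hd0 : 0 ≤ |dv A k| := abs_nonneg _
    have key : |sigmoid (C * ((m:ℝ) - k) + C/2) - (if k ≤ m then (1:ℝ) else 0)|
        ≤ Real.exp (-(C/2)) := by
      split_ifs with h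
      · have hξ : C/2 ≤ C * ((m:ℝ) - k) + C/2 := by
          have : (0:ℝ) ≤ (m:ℝ) - k := by
            have : (k:ℝ) ≤ m := by exact_mod_cast h
            linarith
          nlinarith
        rw [abs_sub_comm, abs_of_nonneg (by linarith [sigmoid_le_one (C * ((m:ℝ) - k) + C/2)])]
        calc 1 - sigmoid (C * ((m:ℝ) - k) + C/2)
            ≤ Real.exp (-(C * ((m:ℝ) - k) + C/2)) := one_sub_sigmoid_le
          _ ≤ Real.exp (-(C/2)) := Real.exp_le_exp.mpr (by linarith)
      · have hξ : C * ((m:ℝ) - k) + C/2 ≤ -(C/2) := by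
          have : (m:ℝ) - k ≤ -1 := by
            have : (m:ℝ) + 1 ≤ k := by exact_mod_cast Nat.succ_le_of_lt (not_le.mp h)
            linarith
          nlinarith
        rw [sub_zero, abs_of_nonneg (sigmoid_pos _).le]
        calc sigmoid (C * ((m:ℝ) - k) + C/2)
            ≤ Real.exp (C * ((m:ℝ) - k) + C/2) := sigmoid_le_exp
          _ ≤ Real.exp (-(C/2)) := Real.exp_le_exp.mpr hξ
    have hb0 := abs_nonneg (sigmoid (C * ((m:ℝ) - k) + C/2) - (if k ≤ m then (1:ℝ) else 0))
    nlinarith [Real.exp_pos (-(C/2))]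
  have herr : |S - Fv A m| ≤ (n+1) * (2 * Real.exp (-(C/2))) := by
    rw [← hstep, hS, ← Finset.sum_sub_distrib]
    refine le_trans (Finset.abs_sum_le_sum_abs _ _) ?_
    refine le_trans (Finset.sum_le_sum hterm) ?_
    rw [Finset.sum_const, Finset.card_range, nsmul_eq_mul]
    push_cast
    exact le_of_eq (by ring)
  have hsmall : (n+1 : ℝ) * (2 * Real.exp (-(C/2))) < 1 := by
    have h1 : ((2:ℝ) * n + 4) + 1 ≤ Real.exp (2 * (n:ℝ) + 4) := Real.add_one_le_exp _
    have h2 : -(C/2) = -(2 * (n:ℝ) + 4) := by rw [hC]; ring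
    rw [h2, Real.exp_neg]
    have hepos : (0:ℝ) < Real.exp (2 * (n:ℝ) + 4) := Real.exp_pos _
    have hcan : Real.exp (2 * (n:ℝ) + 4) * (Real.exp (2 * (n:ℝ) + 4))⁻¹ = 1 :=
      mul_inv_cancel₀ (ne_of_gt hepos)
    have hin : (0:ℝ) < (Real.exp (2 * (n:ℝ) + 4))⁻¹ := inv_pos.mpr hepos
    nlinarith [Nat.cast_nonneg (α := ℝ) n]
  have herr' : |S - Fv A m| < 1 := lt_of_le_of_lt herr hsmall
  have hfa : fA A x = Fv A m := rfl
  rw [hfa, add_zero]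
  rw [abs_lt] at herr'
  unfold Fv
  split_ifs with h
  · simp only [Fv, if_pos h] at herr'
    nlinarith
  · simp only [Fv, if_neg h] at herr'
    nlinarith
end

section
/- With A, B and G as defined, for every integer k ∈ {0,1,...,n} with k ∉ A, G(k) ≤ G(i_1) − 1. -/
/-!
Since `γ_a(ξ) = -|ξ - a|`, regrouping the terms of `A` in consecutive pairs gives
`G(ξ) = ∑ⱼ D(i_j, i_{j+1}, ξ) - (|ξ - i_1| + |ξ - i_t|) / 2`, where
`D(p, q, ξ) = |ξ - (p + q)/2| - (|ξ - p| + |ξ - q|)/2` is never positive, vanishes for `ξ ≤ p ≤ q`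
and is at most `-1` when `p + 1 ≤ ξ ≤ q - 1`. Hence `G(i_1) = -(i_t - i_1)/2`. An integer `k ∉ A`
either lies at distance at least `1` outside `[i_1, i_t]`, where the boundary term alone loses `1`,
or strictly inside a gap `(i_j, i_{j+1})`, where `D` loses `1`.
-/

def γfn (a ξ : ℝ) : ℝ := -max 0 (ξ - a) - max 0 (a - ξ)

/-- `A = {i_1 < ... < i_t}` is encoded by a strictly monotone map `a : Fin (t+1) → ℕ`, and `B` is
the set of midpoints of consecutive elements of `A`. -/
noncomputable def G {t : ℕ} (a : Fin (t + 1) → ℕ) (ξ : ℝ) : ℝ :=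
  (∑ j, γfn (a j : ℝ) ξ) - ∑ j : Fin t, γfn (((a j.castSucc : ℝ) + (a j.succ : ℝ)) / 2) ξ

theorem Fin.exists_castSucc_le_and_lt_succ {α : Type*} [LinearOrder α] :
    ∀ {t : ℕ} (f : Fin (t + 1) → α) {x : α}, f 0 ≤ x → x < f (Fin.last t) →
      ∃ j : Fin t, f j.castSucc ≤ x ∧ x < f j.succ
  | 0, _, _, h0, hlast => absurd h0 (not_le.mpr hlast)
  | t + 1, f, x, h0, hlast => by
    by_cases hx : x < f (Fin.last t).castSucc
    · obtain ⟨j, hj⟩ := exists_castSucc_le_and_lt_succ (fun i => f i.castSucc) h0 hx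
      exact ⟨j.castSucc, hj⟩
    · exact ⟨Fin.last t, not_lt.mp hx, hlast⟩

theorem Fin.sum_castSucc_add_succ {M : Type*} [AddCommMonoid M] {t : ℕ} (f : Fin (t + 1) → M) :
    ∑ j : Fin t, (f j.castSucc + f j.succ) + (f 0 + f (Fin.last t)) = 2 • ∑ j, f j := by
  rw [Finset.sum_add_distrib, two_nsmul]
  nth_rw 2 [Fin.sum_univ_castSucc]
  rw [Fin.sum_univ_succ]
  abel

lemma γfn_eq_neg_abs (a ξ : ℝ) : γfn a ξ = -|ξ - a| := by
  rw [γfn, ← max_zero_add_max_neg_zero_eq_abs_self, neg_sub,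
    max_comm 0 (ξ - a), max_comm 0 (a - ξ)]
  ring

noncomputable def midpointDefect (p q ξ : ℝ) : ℝ :=
  |ξ - (p + q) / 2| - (|ξ - p| + |ξ - q|) / 2

lemma midpointDefect_nonpos (p q ξ : ℝ) : midpointDefect p q ξ ≤ 0 := by
  have hmid : |ξ - (p + q) / 2| = |(ξ - p) + (ξ - q)| / 2 := by
    rw [show (ξ - p) + (ξ - q) = 2 * (ξ - (p + q) / 2) by ring, abs_mul, abs_two]
    ring
  have := abs_add_le (ξ - p) (ξ - q)
  rw [midpointDefect]
  linarith

lemma midpointDefect_eq_zero_of_le {p q ξ : ℝ} (hξ : ξ ≤ p) (hpq : p ≤ q) :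
    midpointDefect p q ξ = 0 := by
  rw [midpointDefect, abs_of_nonpos (by linarith : ξ - (p + q) / 2 ≤ 0),
    abs_of_nonpos (by linarith : ξ - p ≤ 0), abs_of_nonpos (by linarith : ξ - q ≤ 0)]
  ring

lemma midpointDefect_le_neg_one {p q ξ : ℝ} (hp : p + 1 ≤ ξ) (hq : ξ + 1 ≤ q) :
    midpointDefect p q ξ ≤ -1 := by
  rw [midpointDefect, abs_of_nonneg (by linarith : 0 ≤ ξ - p),
    abs_of_nonpos (by linarith : ξ - q ≤ 0)]
  rcases abs_cases (ξ - (p + q) / 2) with ⟨h, _⟩ | ⟨h, _⟩ <;> rw [h] <;> linarith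

section G

variable {t : ℕ} (a : Fin (t + 1) → ℕ)

lemma G_eq_sum_midpointDefect (ξ : ℝ) :
    G a ξ = ∑ j : Fin t, midpointDefect (a j.castSucc) (a j.succ) ξ
      - (|ξ - a 0| + |ξ - a (Fin.last t)|) / 2 := by
  have hpairs := Fin.sum_castSucc_add_succ (fun j => |ξ - a j|)
  simp only [G, γfn_eq_neg_abs, midpointDefect, Finset.sum_sub_distrib, Finset.sum_neg_distrib,
    ← Finset.sum_div, nsmul_eq_mul, Nat.cast_ofNat] at hpairs ⊢
  linarith

lemma G_le_neg_half_dist_ends (ξ : ℝ) :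
    G a ξ ≤ -(|ξ - a 0| + |ξ - a (Fin.last t)|) / 2 := by
  have : ∑ j : Fin t, midpointDefect (a j.castSucc) (a j.succ) ξ ≤ 0 :=
    Finset.sum_nonpos fun _ _ => midpointDefect_nonpos _ _ _
  rw [G_eq_sum_midpointDefect]
  linarith

lemma G_le_of_mem_gap {ξ : ℝ} (j : Fin t) (hlo : (a j.castSucc : ℝ) + 1 ≤ ξ)
    (hhi : ξ + 1 ≤ a j.succ) :
    G a ξ ≤ -1 - (|ξ - a 0| + |ξ - a (Fin.last t)|) / 2 := by
  have hsplit := Finset.sum_erase_add Finset.univ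
    (fun i : Fin t => midpointDefect (a i.castSucc) (a i.succ) ξ) (Finset.mem_univ j)
  have hrest : ∑ i ∈ Finset.univ.erase j, midpointDefect (a i.castSucc) (a i.succ) ξ ≤ 0 :=
    Finset.sum_nonpos fun _ _ => midpointDefect_nonpos _ _ _
  have hgap := midpointDefect_le_neg_one hlo hhi
  rw [G_eq_sum_midpointDefect]
  linarith

lemma G_head_eq (ha : Monotone a) : G a (a 0) = -((a (Fin.last t) - a 0 : ℝ) / 2) := by
  have hzero : ∀ j : Fin t, midpointDefect (a j.castSucc) (a j.succ) (a 0) = 0 := fun j =>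
    midpointDefect_eq_zero_of_le (mod_cast ha (Fin.zero_le _))
      (mod_cast ha Fin.castSucc_lt_succ.le)
  have hends : (a 0 : ℝ) ≤ a (Fin.last t) := mod_cast ha (Fin.zero_le _)
  rw [G_eq_sum_midpointDefect, Finset.sum_eq_zero fun j _ => hzero j, sub_self, abs_zero,
    abs_of_nonpos (by linarith)]
  ring

end G

theorem stmt9_general (n t : ℕ) (a : Fin (t + 1) → ℕ) (ha : StrictMono a) :
    ∀ k : ℕ, k ≤ n → (∀ j, a j ≠ k) → G a (k : ℝ) ≤ G a (a 0 : ℝ) - 1 := by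
  intro k _ hne
  rw [G_head_eq a ha.monotone]
  rcases lt_or_ge k (a 0) with hlo | hlo
  · have : (k : ℝ) + 1 ≤ a 0 := mod_cast hlo
    linarith [G_le_neg_half_dist_ends a k, neg_abs_le ((k : ℝ) - a 0),
      neg_abs_le ((k : ℝ) - a (Fin.last t))]
  rcases lt_or_ge (a (Fin.last t)) k with hhi | hhi
  · have : (a (Fin.last t) : ℝ) + 1 ≤ k := mod_cast hhi
    linarith [G_le_neg_half_dist_ends a k, le_abs_self ((k : ℝ) - a 0),
      le_abs_self ((k : ℝ) - a (Fin.last t))]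
  obtain ⟨j, hjlo, hjhi⟩ :=
    Fin.exists_castSucc_le_and_lt_succ a hlo (hhi.lt_of_ne (hne _).symm)
  have hgap := G_le_of_mem_gap (ξ := k) a j (mod_cast hjlo.lt_of_ne (hne _)) (mod_cast hjhi)
  linarith [abs_sub_le (a (Fin.last t) : ℝ) k (a 0), abs_sub_comm (a (Fin.last t) : ℝ) k,
    le_abs_self ((a (Fin.last t) : ℝ) - a 0)]

/-- For every integer k ∈ {0,...,n} with k ∉ A, G(k) ≤ G(i_1) − 1. -/
theorem stmt9 (n t : ℕ) (ht : 1 ≤ t) (a : Fin (t + 1) → ℕ) (ha : StrictMono a)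
    (haI : ∀ j, a j ∈ Finset.Icc 1 n) :
    ∀ k : ℕ, k ≤ n → (∀ j, a j ≠ k) → G a (k : ℝ) ≤ G a (a 0 : ℝ) - 1 :=
  stmt9_general n t a ha
end
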